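/- arXiv:1701.08956 — 2 statements merged into one kernel-verified Lean document; each statement's English description precedes it below -/
import Mathlib

section
/- If γ₁ and γ₂ are convex integrands on Sⁿ, then γ_max = max(γ₁, γ₂) is also a convex integrand. -/
open RealInnerProductSpace

def unitSphere (n : ℕ) : Set (EuclideanSpace ℝ (Fin (n + 1))) :=
  Metric.sphere (0 : EuclideanSpace ℝ (Fin (n + 1))) 1

def wulffShape (n : ℕ) (γ : EuclideanSpace ℝ (Fin (n + 1)) → ℝ) :
    Set (EuclideanSpace ℝ (Fin (n + 1))) :=
  {x | ∀ θ ∈ unitSphere n, ⟪x, θ⟫ ≤ γ θ}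

/-- `γ` is a convex integrand: it equals the support function of its Wulff shape on the sphere. -/
def IsConvexIntegrand (n : ℕ) (γ : EuclideanSpace ℝ (Fin (n + 1)) → ℝ) : Prop :=
  ContinuousOn γ (unitSphere n) ∧ (∀ θ ∈ unitSphere n, 0 < γ θ) ∧
    ∀ θ ∈ unitSphere n, IsLUB ((fun x => ⟪x, θ⟫) '' wulffShape n γ) (γ θ)


theorem max_isConvexIntegrand (n : ℕ) (γ₁ γ₂ : EuclideanSpace ℝ (Fin (n + 1)) → ℝ)
    (h₁ : IsConvexIntegrand n γ₁) (h₂ : IsConvexIntegrand n γ₂) :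
    IsConvexIntegrand n (fun θ => max (γ₁ θ) (γ₂ θ)) := by
  obtain ⟨hc₁, hp₁, hl₁⟩ := h₁
  obtain ⟨hc₂, hp₂, hl₂⟩ := h₂
  refine ⟨fun x hx => (hc₁ x hx).max (hc₂ x hx), fun θ hθ => lt_max_of_lt_left (hp₁ θ hθ), fun θ hθ => ?_⟩
  constructor
  · rintro y ⟨x, hx, rfl⟩
    exact hx θ hθ
  · intro b hb
    have key : ∀ γ : EuclideanSpace ℝ (Fin (n + 1)) → ℝ,
        (∀ θ' ∈ unitSphere n, γ θ' ≤ max (γ₁ θ') (γ₂ θ')) →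
        IsLUB ((fun x => ⟪x, θ⟫) '' wulffShape n γ) (γ θ) → γ θ ≤ b := by
      intro γ hle hlub
      refine hlub.2 fun y hy => hb ?_
      obtain ⟨x, hx, rfl⟩ := hy
      exact ⟨x, fun θ' hθ' => (hx θ' hθ').trans (hle θ' hθ'), rfl⟩
    exact max_le (key γ₁ (fun θ' _ => le_max_left _ _) (hl₁ θ hθ))
      (key γ₂ (fun θ' _ => le_max_right _ _) (hl₂ θ hθ))
end

section
/- For convex integrands γ₁, γ₂ on Sⁿ whose Wulff shapes are polar duals of each other, the Wulff shape of max(γ₁,γ₂) is the polar dual of the Wulff shape of min(γ₁,γ₂). -/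
open RealInnerProductSpace

/-- The polar dual of a set in `ℝⁿ⁺¹` with respect to the origin. -/
def polarDual (n : ℕ) (W : Set (EuclideanSpace ℝ (Fin (n + 1)))) :
    Set (EuclideanSpace ℝ (Fin (n + 1))) :=
  {y | ∀ x ∈ W, ⟪x, y⟫ ≤ 1}

theorem wulff_max_eq_polarDual_wulff_min (n : ℕ)
    (γ₁ γ₂ : EuclideanSpace ℝ (Fin (n + 1)) → ℝ)
    (h₁ : IsConvexIntegrand n γ₁) (h₂ : IsConvexIntegrand n γ₂)
    (hdual : polarDual n (wulffShape n γ₁) = wulffShape n γ₂) :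
    wulffShape n (fun θ => max (γ₁ θ) (γ₂ θ)) =
      polarDual n (wulffShape n (fun θ => min (γ₁ θ) (γ₂ θ))) := by
  classical
  obtain ⟨-, h₁pos, h₁lub⟩ := h₁
  obtain ⟨-, h₂pos, h₂lub⟩ := h₂
  set W₁ := wulffShape n γ₁ with hW₁
  set W₂ := wulffShape n γ₂ with hW₂
  -- the Wulff shape of min is the intersection
  have hmin : wulffShape n (fun θ => min (γ₁ θ) (γ₂ θ)) = W₁ ∩ W₂ := by
    ext x
    simp only [wulffShape, Set.mem_setOf_eq, Set.mem_inter_iff, le_min_iff, hW₁, hW₂]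
    exact ⟨fun h => ⟨fun θ hθ => (h θ hθ).1, fun θ hθ => (h θ hθ).2⟩,
      fun h θ hθ => ⟨h.1 θ hθ, h.2 θ hθ⟩⟩
  have hzero₁ : (0 : EuclideanSpace ℝ (Fin (n + 1))) ∈ W₁ := by
    intro θ hθ
    simpa [inner_zero_left] using (h₁pos θ hθ).le
  -- key inequality: ⟪θ, φ⟫ ≤ γ₁ φ * γ₂ θ for unit θ, φ
  have key : ∀ θ ∈ unitSphere n, ∀ φ ∈ unitSphere n, ⟪θ, φ⟫ ≤ γ₁ φ * γ₂ θ := by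
    intro θ hθ φ hφ
    have hpφ := h₁pos φ hφ
    have hw : (γ₁ φ)⁻¹ • φ ∈ W₂ := by
      rw [← hdual]
      intro z hz
      have hzφ : ⟪z, φ⟫ ≤ γ₁ φ := hz φ hφ
      rw [real_inner_smul_right]
      calc (γ₁ φ)⁻¹ * ⟪z, φ⟫ ≤ (γ₁ φ)⁻¹ * γ₁ φ := by
            exact mul_le_mul_of_nonneg_left hzφ (inv_nonneg.mpr hpφ.le)
        _ = 1 := inv_mul_cancel₀ hpφ.ne'
    have hle : ⟪(γ₁ φ)⁻¹ • φ, θ⟫ ≤ γ₂ θ := (h₂lub θ hθ).1 ⟨_, hw, rfl⟩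
    rw [real_inner_smul_left] at hle
    have := (mul_le_mul_of_nonneg_left hle hpφ.le)
    rw [← mul_assoc, mul_inv_cancel₀ hpφ.ne', one_mul] at this
    calc ⟪θ, φ⟫ = ⟪φ, θ⟫ := real_inner_comm _ _
      _ ≤ γ₁ φ * γ₂ θ := this
  -- the scaled point lies in the intersection
  have keyA : ∀ θ ∈ unitSphere n,
      (max (γ₁ θ) (γ₂ θ))⁻¹ • θ ∈ W₁ ∩ W₂ := by
    intro θ hθ
    have hM : 0 < max (γ₁ θ) (γ₂ θ) := lt_max_of_lt_left (h₁pos θ hθ)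
    constructor
    · intro φ hφ
      rw [real_inner_smul_left]
      have h1 : ⟪θ, φ⟫ ≤ γ₁ φ * γ₂ θ := key θ hθ φ hφ
      have h2 : γ₁ φ * γ₂ θ ≤ γ₁ φ * max (γ₁ θ) (γ₂ θ) :=
        mul_le_mul_of_nonneg_left (le_max_right _ _) (h₁pos φ hφ).le
      calc (max (γ₁ θ) (γ₂ θ))⁻¹ * ⟪θ, φ⟫
          ≤ (max (γ₁ θ) (γ₂ θ))⁻¹ * (γ₁ φ * max (γ₁ θ) (γ₂ θ)) :=
            mul_le_mul_of_nonneg_left (h1.trans h2) (inv_nonneg.mpr hM.le)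
        _ = γ₁ φ := by field_simp
    · rw [← hdual]
      intro z hz
      have hzθ : ⟪z, θ⟫ ≤ γ₁ θ := hz θ hθ
      rw [real_inner_smul_right]
      calc (max (γ₁ θ) (γ₂ θ))⁻¹ * ⟪z, θ⟫
          ≤ (max (γ₁ θ) (γ₂ θ))⁻¹ * max (γ₁ θ) (γ₂ θ) :=
            mul_le_mul_of_nonneg_left (hzθ.trans (le_max_left _ _))
              (inv_nonneg.mpr hM.le)
        _ = 1 := inv_mul_cancel₀ hM.ne'
  ext y
  constructor
  · -- W(max) ⊆ polar (W₁ ∩ W₂), via closed convex hull of W₁ ∪ W₂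
    intro hy x hx
    rw [hmin] at hx
    set C : Set (EuclideanSpace ℝ (Fin (n + 1))) := closure (convexHull ℝ (W₁ ∪ W₂)) with hC
    have hCconv : Convex ℝ C := (convex_convexHull ℝ _).closure
    have hCclosed : IsClosed C := isClosed_closure
    -- the functional ⟪x, ·⟫ is ≤ 1 on C
    have hfC : ∀ z ∈ C, ⟪x, z⟫ ≤ 1 := by
      have hlin : IsLinearMap ℝ (fun z : EuclideanSpace ℝ (Fin (n + 1)) => ⟪x, z⟫) :=
        ⟨fun a b => inner_add_right x a b, fun c a => real_inner_smul_right x a c⟩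
      have hSconv : Convex ℝ {z : EuclideanSpace ℝ (Fin (n + 1)) | ⟪x, z⟫ ≤ 1} := convex_halfSpace_le hlin 1
      have hSclosed : IsClosed {z : EuclideanSpace ℝ (Fin (n + 1)) | ⟪x, z⟫ ≤ 1} :=
        isClosed_le (Continuous.inner continuous_const continuous_id) continuous_const
      have hsub : W₁ ∪ W₂ ⊆ {z : EuclideanSpace ℝ (Fin (n + 1)) | ⟪x, z⟫ ≤ 1} := by
        rintro z (hz | hz)
        · -- x ∈ W₂ = polar W₁
          have hx2 : x ∈ polarDual n W₁ := by rw [hdual]; exact hx.2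
          have h := hx2 z hz
          show ⟪x, z⟫ ≤ 1
          rwa [real_inner_comm]
        · -- z ∈ W₂ = polar W₁, x ∈ W₁
          have hz2 : z ∈ polarDual n W₁ := by rw [hdual]; exact hz
          show ⟪x, z⟫ ≤ 1
          exact hz2 x hx.1
      exact fun z hz =>
        (closure_minimal (convexHull_min hsub hSconv) hSclosed) hz
    -- y belongs to C, by separation
    have hyC : y ∈ C := by
      by_contra hyn
      obtain ⟨f, c, hfc, hcy⟩ := geometric_hahn_banach_closed_point hCconv hCclosed hyn
      set v : EuclideanSpace ℝ (Fin (n + 1)) := (InnerProductSpace.toDual ℝ (EuclideanSpace ℝ (Fin (n + 1)))).symm f with hv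
      have hfv : ∀ z : EuclideanSpace ℝ (Fin (n + 1)), f z = ⟪v, z⟫ := fun z =>
        (InnerProductSpace.toDual_symm_apply (y := f) (x := z)).symm
      have h0C : (0 : EuclideanSpace ℝ (Fin (n + 1))) ∈ C :=
        subset_closure (subset_convexHull ℝ _ (Or.inl hzero₁))
      have hc0 : 0 < c := by
        have := hfc 0 h0C
        rwa [map_zero] at this
      have hvne : v ≠ 0 := by
        intro h
        have := hcy
        rw [hfv y, h, inner_zero_left] at this
        exact absurd this (not_lt.mpr hc0.le)
      have hnv : 0 < ‖v‖ := norm_pos_iff.mpr hvne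
      set θ : EuclideanSpace ℝ (Fin (n + 1)) := ‖v‖⁻¹ • v with hθdef
      have hθS : θ ∈ unitSphere n := by
        simp only [unitSphere, mem_sphere_iff_norm, sub_zero, hθdef, norm_smul,
          norm_inv, norm_norm]
        exact inv_mul_cancel₀ hnv.ne'
      have hub : ∀ γ : EuclideanSpace ℝ (Fin (n + 1)) → ℝ, (∀ θ ∈ unitSphere n,
          IsLUB ((fun x => ⟪x, θ⟫) '' wulffShape n γ) (γ θ)) →
          wulffShape n γ ⊆ C → γ θ ≤ c / ‖v‖ := by
        intro γ hlub hsubC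
        refine (hlub θ hθS).2 ?_
        rintro _ ⟨z, hz, rfl⟩
        have hzc : f z < c := hfc z (hsubC hz)
        rw [hfv] at hzc
        show ⟪z, θ⟫ ≤ c / ‖v‖
        rw [hθdef, real_inner_smul_right, real_inner_comm]
        rw [div_eq_inv_mul]
        exact mul_le_mul_of_nonneg_left hzc.le (inv_nonneg.mpr hnv.le)
      have hsub₁ : W₁ ⊆ C := fun z hz =>
        subset_closure (subset_convexHull ℝ _ (Or.inl hz))
      have hsub₂ : W₂ ⊆ C := fun z hz =>
        subset_closure (subset_convexHull ℝ _ (Or.inr hz))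
      have hub₁ : γ₁ θ ≤ c / ‖v‖ := hub γ₁ h₁lub hsub₁
      have hub₂ : γ₂ θ ≤ c / ‖v‖ := hub γ₂ h₂lub hsub₂
      have hyθ : ⟪y, θ⟫ ≤ max (γ₁ θ) (γ₂ θ) := hy θ hθS
      have hmaxle : max (γ₁ θ) (γ₂ θ) ≤ c / ‖v‖ := max_le hub₁ hub₂
      have hvy : ⟪v, y⟫ ≤ c := by
        have h1 : ⟪y, θ⟫ ≤ c / ‖v‖ := hyθ.trans hmaxle
        have h2 : ‖v‖ * ⟪y, θ⟫ ≤ ‖v‖ * (c / ‖v‖) :=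
          mul_le_mul_of_nonneg_left h1 hnv.le
        rw [mul_div_cancel₀ _ hnv.ne'] at h2
        calc ⟪v, y⟫ = ‖v‖ * ⟪y, θ⟫ := by
              rw [hθdef, real_inner_smul_right, real_inner_comm]
              field_simp
          _ ≤ c := h2
      rw [hfv y] at hcy
      exact absurd hvy (not_le.mpr hcy)
    exact hfC y hyC
  · -- polar (W₁ ∩ W₂) ⊆ W(max)
    intro hy θ hθ
    have hM : 0 < max (γ₁ θ) (γ₂ θ) := lt_max_of_lt_left (h₁pos θ hθ)
    have hx : (max (γ₁ θ) (γ₂ θ))⁻¹ • θ ∈ wulffShape n (fun θ => min (γ₁ θ) (γ₂ θ)) := by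
      rw [hmin]; exact keyA θ hθ
    have := hy _ hx
    rw [real_inner_smul_left, real_inner_comm] at this
    have h2 : ⟪y, θ⟫ ≤ max (γ₁ θ) (γ₂ θ) := by
      have := mul_le_mul_of_nonneg_left this hM.le
      rwa [← mul_assoc, mul_inv_cancel₀ hM.ne', one_mul, mul_one] at this
    exact h2
end
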